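/- Let φ₁, φ₂ generate closed shift-invariant subspaces V(φ_i) = {Σ_n c[n]φ_i(·−nh) : c ∈ ℓ²} of L², and suppose the cross-correlation filter A₁₂(z) = Σ_n ⟨φ₁(·−nh), φ₂⟩ z^{−n} has no zeros on the unit circle. Then for any x ∈ V(φ₂), writing c₁[n] = ⟨x, φ₁(·−nh)⟩ and k the inverse Z-transform of A₁₂(z)^{−1}, one has x(t) = Σ_n (c₁ ∗ k)[n] φ₂(t−nh). -/

import Mathlib

/-! The partial sums `s_F = ∑_{n ∈ F} c[n] φ₂(· - nh)` converge to `x` pointwise, and the upper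
Riesz bound makes them Cauchy in `L²`; by Fatou's lemma `x ∈ L²` and `s_F → x` in `L²`. Pairing
with `φ₁(· - mh)` is continuous on `L²`, so `c₁ = c ∗ a`. As `c` is bounded and `a, k ∈ ℓ¹`, the
triple convolution converges absolutely, hence `c₁ ∗ k = c ∗ (a ∗ k) = c`, and the expansion of
`x` in `V(φ₂)` is the claimed one. -/

open MeasureTheory Real Filter Topology
open scoped ENNReal

section L2

variable {α E : Type*} {m : MeasurableSpace α} {μ : Measure α} [NormedAddCommGroup E]
  {ι : Type*} {l : Filter ι}

theorem memLp_and_tendsto_eLpNorm_sub_of_ae_tendsto [l.NeBot] [l.IsCountablyGenerated]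
    {p : ℝ≥0∞} {f : ι → α → E} {g : α → E} {C : ι → ℝ≥0∞} (hf : ∀ i, MemLp (f i) p μ)
    (hlim : ∀ᵐ a ∂μ, Tendsto (f · a) l (𝓝 (g a)))
    (hcauchy : ∀ i, ∀ᶠ j in l, eLpNorm (f j - f i) p μ ≤ C i) (hC : Tendsto C l (𝓝 0)) :
    MemLp g p μ ∧ Tendsto (fun i => eLpNorm (g - f i) p μ) l (𝓝 0) := by
  have hbound : ∀ i, eLpNorm (g - f i) p μ ≤ C i := fun i =>
    Lp.eLpNorm_le_of_ae_tendsto (hcauchy i) (fun j => (hf j).1.sub (hf i).1)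
      (hlim.mono fun a ha => ha.sub_const (f i a))
  obtain ⟨i, hi⟩ := (hC.eventually (gt_mem_nhds ENNReal.zero_lt_top)).exists
  have hg : AEStronglyMeasurable g μ :=
    aestronglyMeasurable_of_tendsto_ae l (fun i => (hf i).1) hlim
  have hgi : MemLp (g - f i) p μ := ⟨hg.sub (hf i).1, (hbound i).trans_lt hi⟩
  exact ⟨by simpa using hgi.add (hf i),
    tendsto_of_tendsto_of_tendsto_of_le_of_le tendsto_const_nhds hC (fun _ => zero_le) hbound⟩

theorem tendsto_integral_mul_of_tendsto_eLpNorm_sub {f : ι → α → ℝ} {g u : α → ℝ}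
    (hf : ∀ i, MemLp (f i) 2 μ) (hg : MemLp g 2 μ) (hu : MemLp u 2 μ)
    (h : Tendsto (fun i => eLpNorm (f i - g) 2 μ) l (𝓝 0)) :
    Tendsto (fun i => ∫ a, f i a * u a ∂μ) l (𝓝 (∫ a, g a * u a ∂μ)) := by
  have hinner : ∀ (v : α → ℝ) (hv : MemLp v 2 μ),
      ∫ a, v a * u a ∂μ = inner ℝ (hu.toLp u) (hv.toLp v) := by
    intro v hv
    rw [L2.inner_def]
    refine integral_congr_ae ?_
    filter_upwards [hu.coeFn_toLp, hv.coeFn_toLp] with a hua hva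
    simp [hua, hva, mul_comm]
  simp only [hinner _ (hf _), hinner _ hg]
  exact tendsto_const_nhds.inner ((Lp.tendsto_Lp_iff_tendsto_eLpNorm'' f hf g hg).2 h)

theorem eLpNorm_two_eq_ofReal_sqrt_integral_sq {f : α → ℝ} (hf : MemLp f 2 μ) :
    eLpNorm f 2 μ = ENNReal.ofReal √(∫ a, f a ^ 2 ∂μ) := by
  rw [hf.eLpNorm_eq_integral_rpow_norm two_ne_zero ENNReal.ofNat_ne_top, sqrt_eq_rpow]
  norm_num [Real.norm_eq_abs, sq_abs]

end L2

theorem tsum_tsum_mul_sub_mul_sub_eq_self {c a k : ℤ → ℝ} {C : ℝ} (hc : ∀ j, ‖c j‖ ≤ C)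
    (ha : Summable fun n => |a n|) (hk : Summable fun n => |k n|)
    (hka : ∀ n, HasSum (fun m => k m * a (n - m)) (if n = 0 then 1 else 0)) (n : ℤ) :
    ∑' m, (∑' j, c j * a (m - j)) * k (n - m) = c n := by
  have hsummable : Summable (Function.uncurry fun m j => c j * a (m - j) * k (n - m)) := by
    -- `e (p, q)` is the `(m, j)` with `m - j = p` and `n - m = q`
    let e : ℤ × ℤ ≃ ℤ × ℤ :=
      { toFun := fun p => (n - p.2, n - p.2 - p.1)
        invFun := fun q => (q.1 - q.2, n - q.1)
        left_inv := fun p => by ext <;> simp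
        right_inv := fun q => by ext <;> simp }
    have hak : Summable fun q : ℤ × ℤ => |a (q.1 - q.2)| * |k (n - q.1)| := by
      rw [← e.summable_iff]
      simpa [e, Function.comp_def] using
        ha.mul_of_nonneg hk (fun _ => abs_nonneg _) (fun _ => abs_nonneg _)
    refine Summable.of_norm_bounded (hak.mul_left C) fun q => ?_
    simp only [Function.uncurry, norm_mul, Real.norm_eq_abs, mul_assoc]
    exact mul_le_mul_of_nonneg_right (hc _) (by positivity)
  have hdelta : ∀ j, HasSum (fun m => a (m - j) * k (n - m)) (if n - j = 0 then 1 else 0) := by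
    intro j
    rw [← (Equiv.subLeft n).hasSum_iff]
    convert hka (n - j) using 2 with m
    simp only [Function.comp_apply, Equiv.subLeft_apply]
    rw [sub_sub_cancel, sub_right_comm, mul_comm]
  calc ∑' m, (∑' j, c j * a (m - j)) * k (n - m)
      = ∑' m, ∑' j, c j * a (m - j) * k (n - m) := by simp only [tsum_mul_right]
    _ = ∑' j, ∑' m, c j * a (m - j) * k (n - m) := hsummable.tsum_comm.symm
    _ = ∑' j, c j * if n - j = 0 then 1 else 0 := by
      refine tsum_congr fun j => ?_
      simpa only [mul_assoc] using ((hdelta j).mul_left (c j)).tsum_eq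
    _ = c n := by
      rw [tsum_eq_single n fun j hj => by rw [if_neg (sub_ne_zero.2 hj.symm), mul_zero]]
      simp

section ShiftInvariantSpace

variable {φ : ℝ → ℝ} {h B : ℝ} {c : ℤ → ℝ}

def HasUpperRieszBound (φ : ℝ → ℝ) (h B : ℝ) : Prop :=
  ∀ d : ℤ →₀ ℝ, (∫ t : ℝ, (∑ n ∈ d.support, d n * φ (t - n * h)) ^ 2) ≤
    B * ∑ n ∈ d.support, (d n) ^ 2

def shiftSum (φ : ℝ → ℝ) (h : ℝ) (c : ℤ → ℝ) (F : Finset ℤ) (t : ℝ) : ℝ :=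
  ∑ n ∈ F, c n * φ (t - n * h)

theorem memLp_shiftSum (hφ : MemLp φ 2 (volume : Measure ℝ)) (F : Finset ℤ) :
    MemLp (shiftSum φ h c F) 2 (volume : Measure ℝ) := by
  have := memLp_finsetSum' (μ := volume) F fun n _ =>
    (hφ.comp_measurePreserving (measurePreserving_sub_right volume (n * h))).const_mul (c n)
  convert this using 1
  ext t
  simp [shiftSum]

theorem shiftSum_sub_shiftSum {F G : Finset ℤ} (hFG : F ⊆ G) :
    shiftSum φ h c G - shiftSum φ h c F = shiftSum φ h c (G \ F) := by
  ext t
  simp only [Pi.sub_apply, shiftSum, Finset.sum_sdiff_eq_sub hFG]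

theorem integral_shiftSum_sq_le (hB : HasUpperRieszBound φ h B) (F : Finset ℤ) :
    ∫ t, shiftSum φ h c F t ^ 2 ≤ B * ∑ n ∈ F, c n ^ 2 := by
  classical
  let d : ℤ →₀ ℝ := Finsupp.onFinset F (fun n => if n ∈ F then c n else 0)
    fun n hn => by by_contra hnF; simp [hnF] at hn
  have hsum : ∀ g : ℤ → ℝ → ℝ, (∀ n, g n 0 = 0) →
      ∑ n ∈ d.support, g n (d n) = ∑ n ∈ F, g n (c n) := fun g hg => by
    rw [← Finsupp.sum, Finsupp.onFinset_sum _ hg]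
    exact Finset.sum_congr rfl fun n hn => by rw [if_pos hn]
  have := hB d
  rwa [hsum (fun n r => r ^ 2) (by simp),
    integral_congr_ae (ae_of_all _ fun t => by
      rw [hsum (fun n r => r * φ (t - n * h)) (by simp)])] at this

theorem eLpNorm_shiftSum_sub_le (hφ : MemLp φ 2 (volume : Measure ℝ)) (hB₀ : 0 ≤ B)
    (hB : HasUpperRieszBound φ h B) {S : ℝ} (hS : HasSum (fun n => c n ^ 2) S)
    {F G : Finset ℤ} (hFG : F ⊆ G) :
    eLpNorm (shiftSum φ h c G - shiftSum φ h c F) 2 volume ≤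
      ENNReal.ofReal √(B * (S - ∑ n ∈ F, c n ^ 2)) := by
  rw [shiftSum_sub_shiftSum hFG, eLpNorm_two_eq_ofReal_sqrt_integral_sq (memLp_shiftSum hφ _)]
  refine ENNReal.ofReal_le_ofReal (sqrt_le_sqrt ((integral_shiftSum_sq_le hB _).trans ?_))
  refine mul_le_mul_of_nonneg_left ?_ hB₀
  rw [Finset.sum_sdiff_eq_sub hFG, sub_le_sub_iff_right]
  exact sum_le_hasSum G (fun n _ => sq_nonneg (c n)) hS

theorem memLp_and_tendsto_eLpNorm_sub_shiftSum (hφ : MemLp φ 2 (volume : Measure ℝ))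
    (hB₀ : 0 ≤ B) (hB : HasUpperRieszBound φ h B) (hc : Memℓp c 2) {x : ℝ → ℝ}
    (hx : ∀ t, HasSum (fun n => c n * φ (t - n * h)) (x t)) :
    MemLp x 2 volume ∧ Tendsto (fun F => eLpNorm (x - shiftSum φ h c F) 2 volume) atTop (𝓝 0) := by
  obtain ⟨S, hS⟩ : Summable fun n => c n ^ 2 := by
    simpa [Real.norm_eq_abs, sq_abs] using hc.summable (by norm_num)
  refine memLp_and_tendsto_eLpNorm_sub_of_ae_tendsto (memLp_shiftSum hφ) (ae_of_all _ hx)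
    (fun F => (eventually_ge_atTop F).mono fun _ hFG => eLpNorm_shiftSum_sub_le hφ hB₀ hB hS hFG)
    ?_
  have hsum : Tendsto (fun F => ∑ n ∈ F, c n ^ 2) atTop (𝓝 S) := hS
  simpa using ENNReal.tendsto_ofReal (((tendsto_const_nhds (x := S)).sub hsum).const_mul B).sqrt

theorem integral_shiftSum_mul_shift {ψ : ℝ → ℝ} (hφ : MemLp φ 2 (volume : Measure ℝ))
    (hψ : MemLp ψ 2 (volume : Measure ℝ)) {a : ℤ → ℝ}
    (ha : ∀ n : ℤ, a n = ∫ t : ℝ, ψ (t - n * h) * φ t) (F : Finset ℤ) (m : ℤ) :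
    ∫ t, shiftSum φ h c F t * ψ (t - m * h) = ∑ j ∈ F, c j * a (m - j) := by
  simp only [shiftSum, Finset.sum_mul, mul_assoc]
  rw [integral_finsetSum _ fun j _ => ?_]
  · refine Finset.sum_congr rfl fun j _ => ?_
    rw [integral_const_mul, ha,
      ← integral_sub_right_eq_self (fun t => ψ (t - ((m - j : ℤ) : ℝ) * h) * φ t) (j * h)]
    congr 2 with t
    rw [mul_comm]
    congr 2
    push_cast
    ring
  · exact (((hφ.comp_measurePreserving (measurePreserving_sub_right volume (j * h))).integrable_mul
      (hψ.comp_measurePreserving (measurePreserving_sub_right volume (m * h))))).const_mul (c j)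

theorem hasSum_mul_sub_integral_mul_shift {ψ : ℝ → ℝ} (hφ : MemLp φ 2 (volume : Measure ℝ))
    (hψ : MemLp ψ 2 (volume : Measure ℝ)) (hB₀ : 0 ≤ B) (hB : HasUpperRieszBound φ h B)
    {a : ℤ → ℝ} (ha : ∀ n : ℤ, a n = ∫ t : ℝ, ψ (t - n * h) * φ t) (hc : Memℓp c 2)
    {x : ℝ → ℝ} (hx : ∀ t, HasSum (fun n => c n * φ (t - n * h)) (x t)) (m : ℤ) :
    HasSum (fun j => c j * a (m - j)) (∫ t, x t * ψ (t - m * h)) := by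
  obtain ⟨hx₂, hlim⟩ := memLp_and_tendsto_eLpNorm_sub_shiftSum hφ hB₀ hB hc hx
  show Tendsto (fun F => ∑ j ∈ F, c j * a (m - j)) atTop _
  refine (tendsto_integral_mul_of_tendsto_eLpNorm_sub (memLp_shiftSum hφ) hx₂
    (hψ.comp_measurePreserving (measurePreserving_sub_right volume (m * h)))
    (by simpa only [eLpNorm_sub_comm] using hlim)).congr fun F => ?_
  exact integral_shiftSum_mul_shift hφ hψ ha F m

end ShiftInvariantSpace

theorem generalized_sampling_theorem_general (h : ℝ)
    (φ₁ φ₂ : ℝ → ℝ)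
    (hφ₁ : MemLp φ₁ 2 (volume : Measure ℝ))
    (hφ₂ : MemLp φ₂ 2 (volume : Measure ℝ))
    -- the h-shifts of φ₁ and φ₂ are Riesz systems:
    (hRiesz : ∃ A B : ℝ, 0 < A ∧ 0 < B ∧ ∀ φ ∈ ({φ₁, φ₂} : Set (ℝ → ℝ)),
      ∀ d : ℤ →₀ ℝ,
        A * ∑ n ∈ d.support, (d n) ^ 2 ≤
            (∫ t : ℝ, (∑ n ∈ d.support, d n * φ (t - n * h)) ^ 2) ∧
        (∫ t : ℝ, (∑ n ∈ d.support, d n * φ (t - n * h)) ^ 2) ≤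
            B * ∑ n ∈ d.support, (d n) ^ 2)
    (a : ℤ → ℝ) (ha : ∀ n : ℤ, a n = ∫ t : ℝ, φ₁ (t - n * h) * φ₂ t)
    (haSummable : Summable fun n : ℤ => |a n|)
    -- k is the impulse response of K(z) = A₁₂(z)⁻¹:
    (k : ℤ → ℝ) (hkSummable : Summable fun n : ℤ => |k n|)
    (hk : ∀ n : ℤ,
      HasSum (fun m : ℤ => k m * a (n - m)) (if n = 0 then 1 else 0))
    -- x ∈ V(φ₂):
    (x : ℝ → ℝ) (c : ℤ → ℝ) (hc : Memℓp c 2)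
    (hx : ∀ t : ℝ, HasSum (fun n : ℤ => c n * φ₂ (t - n * h)) (x t))
    -- the generalized samples c₁[n] = ⟨x, φ₁(·−nh)⟩:
    (c₁ : ℤ → ℝ) (hc₁ : ∀ n : ℤ, c₁ n = ∫ t : ℝ, x t * φ₁ (t - n * h)) :
    ∀ t : ℝ,
      HasSum (fun n : ℤ => (∑' m : ℤ, c₁ m * k (n - m)) * φ₂ (t - n * h))
        (x t) := by
  obtain ⟨_, B, -, hB₀, hRiesz⟩ := hRiesz
  have hc₁_conv : ∀ m, HasSum (fun j => c j * a (m - j)) (c₁ m) := fun m => by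
    rw [hc₁ m]
    exact hasSum_mul_sub_integral_mul_shift hφ₂ hφ₁ hB₀.le (fun d => (hRiesz φ₂ (by simp) d).2)
      ha hc hx m
  obtain ⟨C, hC⟩ := memℓp_infty_iff.1 (hc.of_exponent_ge le_top)
  intro t
  convert hx t using 2 with n
  rw [← tsum_tsum_mul_sub_mul_sub_eq_self (fun j => hC ⟨j, rfl⟩) haSummable hkSummable hk n]
  simp only [(hc₁_conv _).tsum_eq]

/-- **Generalized sampling theorem (Unser–Aldroubi).**
`φ₁, φ₂ ∈ L²(ℝ)` generate shift-invariant spaces (their `h`-shifts being Riesz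
systems).  If the cross-correlation filter `A₁₂(z) = Σ_n a_n z^{-n}`,
`a_n = ⟨φ₁(·−nh), φ₂⟩`, has no zeros on the unit circle, with (convolution)
inverse filter `k`, then any `x ∈ V(φ₂)` is reconstructed from the generalized
samples `c₁[n] = ⟨x, φ₁(·−nh)⟩` as `x(t) = Σ_n (c₁ ∗ k)[n] φ₂(t−nh)`. -/
theorem generalized_sampling_theorem (h : ℝ) (hh : 0 < h)
    (φ₁ φ₂ : ℝ → ℝ)
    (hφ₁ : MemLp φ₁ 2 (volume : Measure ℝ))
    (hφ₂ : MemLp φ₂ 2 (volume : Measure ℝ))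
    -- the h-shifts of φ₁ and φ₂ are Riesz systems:
    (hRiesz : ∃ A B : ℝ, 0 < A ∧ 0 < B ∧ ∀ φ ∈ ({φ₁, φ₂} : Set (ℝ → ℝ)),
      ∀ d : ℤ →₀ ℝ,
        A * ∑ n ∈ d.support, (d n) ^ 2 ≤
            (∫ t : ℝ, (∑ n ∈ d.support, d n * φ (t - n * h)) ^ 2) ∧
        (∫ t : ℝ, (∑ n ∈ d.support, d n * φ (t - n * h)) ^ 2) ≤
            B * ∑ n ∈ d.support, (d n) ^ 2)
    (a : ℤ → ℝ) (ha : ∀ n : ℤ, a n = ∫ t : ℝ, φ₁ (t - n * h) * φ₂ t)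
    -- A₁₂(z) has no zeros on the unit circle:
    (haSummable : Summable fun n : ℤ => |a n|)
    (hinv : ∀ θ : ℝ,
      (∑' n : ℤ, (a n : ℂ) * Complex.exp (-(n * θ) * Complex.I)) ≠ 0)
    -- k is the impulse response of K(z) = A₁₂(z)⁻¹:
    (k : ℤ → ℝ) (hkSummable : Summable fun n : ℤ => |k n|)
    (hk : ∀ n : ℤ,
      HasSum (fun m : ℤ => k m * a (n - m)) (if n = 0 then 1 else 0))
    -- x ∈ V(φ₂):
    (x : ℝ → ℝ) (c : ℤ → ℝ) (hc : Memℓp c 2)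
    (hx : ∀ t : ℝ, HasSum (fun n : ℤ => c n * φ₂ (t - n * h)) (x t))
    -- the generalized samples c₁[n] = ⟨x, φ₁(·−nh)⟩:
    (c₁ : ℤ → ℝ) (hc₁ : ∀ n : ℤ, c₁ n = ∫ t : ℝ, x t * φ₁ (t - n * h)) :
    ∀ t : ℝ,
      HasSum (fun n : ℤ => (∑' m : ℤ, c₁ m * k (n - m)) * φ₂ (t - n * h))
        (x t) :=
  generalized_sampling_theorem_general h φ₁ φ₂ hφ₁ hφ₂ hRiesz a ha haSummable k hkSummable hk x c hc
    hx c₁ hc₁
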